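/- arXiv:0704.2838 — 7 statements merged into one kernel-verified Lean document; each statement's English description precedes it below -/
import Mathlib

section
/- For every a ∈ ℂ∖{0} and every integer k ≥ 1, the identity F_k(a)·F_k(aq²) = F_{k+1}(a)·F_{k−1}(aq²) + F_k(−aq) holds in R. (This is the twisted T-system of type A_2^{(2)}: the explicit q-characters of the Kirillov–Reshetikhin modules of the twisted quantum loop algebra of type A_2^{(2)} solve the twisted T-system.) -/
noncomputable section

/-- Monomials: the free abelian group on `ℂˣ` written additively;
`Finsupp.single a 1` corresponds to the generator `Z_a`. -/
abbrev Mon : Type := ℂˣ →₀ ℤ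

/-- The group ring `R = ℤ[G]`, i.e. Laurent polynomials in the variables `Z_a`. -/
abbrev LR : Type := AddMonoidAlgebra ℤ Mon

/-- The generator `Z_a` of the free abelian group of monomials. -/
def Z (a : ℂˣ) : Mon := Finsupp.single a 1

/-- `A_a = Z_{aq} · Z_{aq⁻¹} · Z_{-a}⁻¹` (written additively). -/
def A (q a : ℂˣ) : Mon := Z (a * q) + Z (a * q⁻¹) - Z (-a)

/-- The monomial `m_{k,a} = ∏_{s=1}^{k} Z_{a q^{2s-2}}` (written additively). -/
def mKR (q : ℂˣ) (k : ℕ) (a : ℂˣ) : Mon := ∑ s ∈ Finset.range k, Z (a * q ^ (2 * s))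

/-- The twisted q-character
`F_k(a) = m_{k,a} · Σ_{0 ≤ R' ≤ R ≤ k} (∏_{r=1}^{R} A_{aq^{2k+1-2r}}⁻¹)(∏_{r'=1}^{R'} A_{-aq^{2k+2-2r'}}⁻¹)`
of the Kirillov-Reshetikhin module `W_{k,a}` of the twisted quantum loop algebra of
type `A₂⁽²⁾`, as an element of the group ring `ℤ[G]`. -/
def FKR (q : ℂˣ) (k : ℕ) (a : ℂˣ) : LR :=
  ∑ R ∈ Finset.range (k + 1), ∑ R' ∈ Finset.range (R + 1),
    AddMonoidAlgebra.single
      (mKR q k a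
        - ∑ r ∈ Finset.range R, A q (a * q ^ (2 * (k : ℤ) + 1 - 2 * ((r : ℤ) + 1)))
        - ∑ r' ∈ Finset.range R', A q (-(a * q ^ (2 * (k : ℤ) + 2 - 2 * ((r' : ℤ) + 1))))) 1

/-!
Written additively, `F_k(a)` is the sum of the monomials `m_{k,a} - P_k(R) - Q_k(R')` over
`R' ≤ R ≤ k`, where `P_k(R) = Σ_{r<R} A_{aq^{2k-1-2r}}` and `Q_k(R') = Σ_{r<R'} A_{-aq^{2k-2r}}`.
Shifting `a ↦ aq²` raises the level of `P, Q` by one, and `a ↦ -aq` turns `P_k` into `Q_k` and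
`Q_k` into `P_{k+1}`. So both products of the T-system are sums of one weight over quadruples
`((i, j), (p, r))`, and since `P_k(k) = m_{k,a} + m_{k,aq²} - m_{k,-aq}`, `F_k(-aq)` is the slice
`i = k, r = 0, p ≤ j` of the left-hand side. As `P_{k+1}(p + 1) = A_{aq^{2k+1}} + P_k(p)`, the
weight is unchanged under `(i, p + 1) ↦ (p, i + 1)`, and likewise for `(j, r + 1)`; these swaps
give a bijection between the rest of the left-hand side and the terms of `F_{k+1}(a) F_{k-1}(aq²)`.
-/

namespace TwistedTSystem

open Finset

section Triangle

def triangle (n : ℕ) : Finset (ℕ × ℕ) := (range n ×ˢ range n).filter fun x => x.2 ≤ x.1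

@[simp]
lemma mem_triangle {n : ℕ} {x : ℕ × ℕ} : x ∈ triangle n ↔ x.2 ≤ x.1 ∧ x.1 < n := by
  simp only [triangle, mem_filter, mem_product, mem_range]
  omega

variable {M : Type*} [AddCommMonoid M]

lemma sum_triangle (n : ℕ) (f : ℕ → ℕ → M) :
    ∑ x ∈ triangle n, f x.1 x.2 = ∑ R ∈ range n, ∑ R' ∈ range (R + 1), f R R' := by
  rw [triangle, sum_filter, sum_product]
  refine sum_congr rfl fun R hR => ?_
  rw [← sum_filter]
  congr 1
  ext R'
  simp only [mem_filter, mem_range] at hR ⊢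
  omega

lemma sum_triangle_product_succ (w : (ℕ × ℕ) × (ℕ × ℕ) → M) (k : ℕ)
    (hA : ∀ i j p r, w ((i, j), (p + 1, r + 1)) = w ((p, r), (i + 1, j + 1)))
    (hB : ∀ i j p, w ((i, j), (p + 1, 0)) = w ((p, j), (i + 1, 0))) :
    ∑ x ∈ triangle (k + 1) ×ˢ triangle (k + 1), w x =
      ∑ x ∈ triangle k ×ˢ triangle (k + 2), w x + ∑ t ∈ triangle (k + 1), w ((k, t.1), (t.2, 0)) := by
  rw [← sum_filter_not_add_sum_filter _ fun x => x.1.1 = k ∧ x.2.2 = 0 ∧ x.2.1 ≤ x.1.2]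
  congr 1
  -- Off the slice, `hA` moves the terms with `r > 0`, `hB` those with `r = 0, i = k`.
  · refine sum_nbij'
      (fun x => if 0 < x.2.2 then ((x.2.1 - 1, x.2.2 - 1), (x.1.1 + 1, x.1.2 + 1))
        else if x.1.1 = k then ((x.2.1 - 1, x.1.2), (k + 1, 0)) else x)
      (fun x => if 0 < x.2.2 then ((x.2.1 - 1, x.2.2 - 1), (x.1.1 + 1, x.1.2 + 1))
        else if x.2.1 = k + 1 then ((k, x.1.2), (x.1.1 + 1, 0)) else x)
      ?_ ?_ ?_ ?_ ?_ <;>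
    rintro ⟨⟨i, j⟩, p, r⟩ h <;> dsimp only <;>
    simp only [mem_filter, mem_product, mem_triangle, not_and, not_le] at h
    · split_ifs <;> simp only [mem_product, mem_triangle] <;> omega
    · split_ifs <;> simp only [mem_filter, mem_product, mem_triangle] <;> omega
    · split_ifs <;> simp only [Prod.mk.injEq, and_true, not_true_eq_false] at * <;> omega
    · split_ifs <;> simp only [Prod.mk.injEq, and_true, not_true_eq_false] at * <;> omega
    · split_ifs with hr hi
      · obtain ⟨p, rfl⟩ : ∃ p', p = p' + 1 := ⟨p - 1, by omega⟩
        obtain ⟨r, rfl⟩ : ∃ r', r = r' + 1 := ⟨r - 1, by omega⟩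
        exact hA i j p r
      · obtain ⟨p, rfl⟩ : ∃ p', p = p' + 1 := ⟨p - 1, by omega⟩
        obtain rfl : r = 0 := by omega
        subst hi
        exact hB i j p
      · rfl
  · refine sum_nbij' (fun x => (x.1.2, x.2.1)) (fun t => ((k, t.1), (t.2, 0))) ?_ ?_ ?_ ?_ ?_
    · rintro ⟨⟨i, j⟩, p, r⟩ h
      simp only [mem_filter, mem_product, mem_triangle] at h ⊢
      omega
    · rintro ⟨t, t'⟩ h
      simp only [mem_filter, mem_product, mem_triangle, true_and] at h ⊢
      omega
    · rintro ⟨⟨i, j⟩, p, r⟩ h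
      simp only [mem_filter, mem_product, mem_triangle, Prod.mk.injEq, and_true, true_and] at h ⊢
      omega
    · intro t _
      rfl
    · rintro ⟨⟨i, j⟩, p, r⟩ h
      simp only [mem_filter] at h
      obtain ⟨-, rfl, rfl, -⟩ := h
      rfl

end Triangle

lemma sum_single_mul_sum_single {R G ι κ : Type*} [Semiring R] [AddMonoid G]
    {s : Finset ι} {t : Finset κ} (f : ι → G) (g : κ → G) :
    (∑ x ∈ s, AddMonoidAlgebra.single (f x) (1 : R)) * ∑ y ∈ t, AddMonoidAlgebra.single (g y) 1 =
      ∑ z ∈ s ×ˢ t, AddMonoidAlgebra.single (f z.1 + g z.2) 1 := by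
  simp only [sum_mul_sum, sum_product, AddMonoidAlgebra.single_mul_single, mul_one]

section QCharacter

open AddMonoidAlgebra

variable (q a : ℂˣ)

-- `P_k(R)` and `Q_k(R')`.
def AProd (k R : ℕ) : Mon :=
  ∑ r ∈ range R, A q (a * q ^ (2 * (k : ℤ) + 1 - 2 * ((r : ℤ) + 1)))

def AProdNeg (k R : ℕ) : Mon :=
  ∑ r ∈ range R, A q (-(a * q ^ (2 * (k : ℤ) + 2 - 2 * ((r : ℤ) + 1))))

lemma FKR_eq_sum_triangle (k : ℕ) :
    FKR q k a = ∑ x ∈ triangle (k + 1), single (mKR q k a - AProd q a k x.1 - AProdNeg q a k x.2) 1 :=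
  (sum_triangle _ fun R R' => single (mKR q k a - AProd q a k R - AProdNeg q a k R') 1).symm

lemma AProd_mul_sq (k R : ℕ) : AProd q (a * q ^ 2) k R = AProd q a (k + 1) R := by
  refine sum_congr rfl fun r _ => ?_
  push_cast
  group

lemma AProdNeg_mul_sq (k R : ℕ) : AProdNeg q (a * q ^ 2) k R = AProdNeg q a (k + 1) R := by
  refine sum_congr rfl fun r _ => ?_
  push_cast
  group

lemma AProd_neg_mul (k R : ℕ) : AProd q (-(a * q)) k R = AProdNeg q a k R := by
  refine sum_congr rfl fun r _ => ?_
  rw [neg_mul]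
  group

lemma AProdNeg_neg_mul (k R : ℕ) : AProdNeg q (-(a * q)) k R = AProd q a (k + 1) R := by
  refine sum_congr rfl fun r _ => ?_
  rw [neg_mul, neg_neg]
  push_cast
  group

lemma AProd_succ_succ (k R : ℕ) :
    AProd q a (k + 1) (R + 1) = A q (a * q ^ (2 * (k : ℤ) + 1)) + AProd q a k R := by
  rw [AProd, sum_range_succ']
  push_cast
  rw [add_comm]
  congr 1
  · group
  · exact sum_congr rfl fun r _ => by group

lemma AProdNeg_succ_succ (k R : ℕ) :
    AProdNeg q a (k + 1) (R + 1) = A q (-(a * q ^ (2 * (k : ℤ) + 2))) + AProdNeg q a k R := by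
  rw [AProdNeg, sum_range_succ']
  push_cast
  rw [add_comm]
  congr 1
  · group
  · exact sum_congr rfl fun r _ => by group

lemma mKR_succ (k : ℕ) : mKR q (k + 1) a = mKR q k a + Z (a * q ^ (2 * k)) :=
  sum_range_succ _ _

lemma AProd_self (k : ℕ) :
    AProd q a k k = mKR q k a + mKR q k (a * q ^ 2) - mKR q k (-(a * q)) := by
  induction k with
  | zero => simp [AProd, mKR]
  | succ k ih =>
    have hA : A q (a * q ^ (2 * (k : ℤ) + 1)) =
        Z (a * q ^ 2 * q ^ (2 * k)) + Z (a * q ^ (2 * k)) - Z (-(a * q) * q ^ (2 * k)) := by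
      rw [A, neg_mul]
      congr 3 <;> group
    rw [AProd_succ_succ, ih, hA, mKR_succ, mKR_succ, mKR_succ]
    abel

lemma mKR_add_mKR_mul_sq (k : ℕ) :
    mKR q (k + 2) a + mKR q k (a * q ^ 2) = mKR q (k + 1) a + mKR q (k + 1) (a * q ^ 2) := by
  have h : a * q ^ (2 * (k + 1)) = a * q ^ 2 * q ^ (2 * k) := by group
  rw [mKR_succ q a (k + 1), mKR_succ q (a * q ^ 2) k, h]
  abel

def prodTerm (k : ℕ) (x : (ℕ × ℕ) × (ℕ × ℕ)) : LR :=
  single (mKR q k a + mKR q k (a * q ^ 2) - AProd q a k x.1.1 - AProdNeg q a k x.1.2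
    - AProd q a (k + 1) x.2.1 - AProdNeg q a (k + 1) x.2.2) 1

lemma prodTerm_succ_succ (k i j p r : ℕ) :
    prodTerm q a k ((i, j), (p + 1, r + 1)) = prodTerm q a k ((p, r), (i + 1, j + 1)) := by
  simp only [prodTerm, AProd_succ_succ, AProdNeg_succ_succ]
  congr 1
  abel

lemma prodTerm_succ_zero (k i j p : ℕ) :
    prodTerm q a k ((i, j), (p + 1, 0)) = prodTerm q a k ((p, j), (i + 1, 0)) := by
  simp only [prodTerm, AProd_succ_succ]
  congr 1
  abel

lemma FKR_mul_FKR_mul_sq (k : ℕ) :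
    FKR q k a * FKR q k (a * q ^ 2) = ∑ x ∈ triangle (k + 1) ×ˢ triangle (k + 1), prodTerm q a k x := by
  rw [FKR_eq_sum_triangle, FKR_eq_sum_triangle, sum_single_mul_sum_single]
  refine sum_congr rfl fun x _ => ?_
  rw [prodTerm, AProd_mul_sq, AProdNeg_mul_sq]
  congr 1
  abel

lemma FKR_mul_sq_mul_FKR_add_two (k : ℕ) :
    FKR q k (a * q ^ 2) * FKR q (k + 2) a =
      ∑ x ∈ triangle (k + 1) ×ˢ triangle (k + 3), prodTerm q a (k + 1) x := by
  rw [FKR_eq_sum_triangle, FKR_eq_sum_triangle, sum_single_mul_sum_single]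
  refine sum_congr rfl fun x _ => ?_
  rw [prodTerm, AProd_mul_sq, AProdNeg_mul_sq, ← mKR_add_mKR_mul_sq]
  congr 1
  abel

lemma FKR_neg_mul (k : ℕ) :
    FKR q k (-(a * q)) = ∑ t ∈ triangle (k + 1), prodTerm q a k ((k, t.1), (t.2, 0)) := by
  rw [FKR_eq_sum_triangle]
  refine sum_congr rfl fun t _ => ?_
  rw [prodTerm, AProd_neg_mul, AProdNeg_neg_mul, AProd_self,
    show AProdNeg q a (k + 1) 0 = 0 from sum_range_zero _]
  congr 1
  abel

end QCharacter

end TwistedTSystem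

open TwistedTSystem in
theorem twisted_T_system_A2_2_general (q : ℂˣ)
    (a : ℂˣ) (k : ℕ) (hk : 1 ≤ k) :
    FKR q k a * FKR q k (a * q ^ 2) =
      FKR q (k + 1) a * FKR q (k - 1) (a * q ^ 2) + FKR q k (-(a * q)) := by
  obtain ⟨k, rfl⟩ : ∃ m, k = m + 1 := ⟨k - 1, by omega⟩
  rw [Nat.add_sub_cancel, mul_comm (FKR q (k + 1 + 1) a), FKR_mul_FKR_mul_sq,
    FKR_mul_sq_mul_FKR_add_two, FKR_neg_mul]
  exact sum_triangle_product_succ _ _ (prodTerm_succ_succ q a _) (prodTerm_succ_zero q a _)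

/-- The twisted T-system of type `A₂⁽²⁾`:
`F_k(a) F_k(aq²) = F_{k+1}(a) F_{k-1}(aq²) + F_k(-aq)`. -/
theorem twisted_T_system_A2_2 (q : ℂˣ) (hq : ∀ n : ℕ, 0 < n → (q : ℂ) ^ n ≠ 1)
    (a : ℂˣ) (k : ℕ) (hk : 1 ≤ k) :
    FKR q k a * FKR q k (a * q ^ 2) =
      FKR q (k + 1) a * FKR q (k - 1) (a * q ^ 2) + FKR q k (-(a * q)) :=
  twisted_T_system_A2_2_general q a k hk
end
end

section
/- For every a ∈ ℂ∖{0}, every integer k ≥ 1, and every pair of integers (R,R') with 0 ≤ R' ≤ R ≤ k and (R,R') ≠ (0,0), the monomial m_{k,a}·(∏_{r=1}^{R} A_{aq^{2k+1−2r}}^{-1})·(∏_{r'=1}^{R'} A_{−aq^{2k+2−2r'}}^{-1}) is not dominant (it has a strictly negative exponent at some variable). Consequently m_{k,a} is the unique dominant monomial occurring in F_k(a), and it occurs with coefficient 1 (the Kirillov–Reshetikhin modules of the twisted quantum loop algebra of type A_2^{(2)} are special). -/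
/-! Write `c_j = a q^j`. As `q` has infinite order, the points `±c_j` (`j ∈ ℤ`) are pairwise
distinct, so exponents can be read off index by index. If `R' = 0 < R`, the factor
`A_{c_{2k-1}}⁻¹` lowers the exponent of `Z_{c_{2k}}`, which `m_{k,a}` does not contain and no
other factor raises; if `R' > 0`, the factor `A_{-c_{2k}}⁻¹` does the same to `Z_{-c_{2k+1}}`.
So only `(R, R') = (0, 0)` yields a dominant monomial, namely `m_{k,a}`, and it occurs once. -/

noncomputable section

open Finset

lemma mul_zpow_inj {G : Type*} [Group G] {q : G} (hq : ¬IsOfFinOrder q) (a : G) {i j : ℤ} :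
    a * q ^ i = a * q ^ j ↔ i = j := by
  rw [mul_right_inj]
  exact (injective_zpow_iff_not_isOfFinOrder.2 hq).eq_iff

lemma mul_zpow_ne_neg {K : Type*} [Field K] [CharZero K] {q : Kˣ} (hq : ¬IsOfFinOrder q)
    (a : Kˣ) (i j : ℤ) : a * q ^ i ≠ -(a * q ^ j) := by
  intro h
  have hsq : a ^ 2 * q ^ (2 * i) = a ^ 2 * q ^ (2 * j) := by
    rw [mul_comm 2 i, mul_comm 2 j, zpow_mul, zpow_mul, zpow_ofNat, zpow_ofNat, ← mul_pow,
      ← mul_pow, h, neg_sq]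
  obtain rfl : i = j := by
    have := (mul_zpow_inj hq (a ^ 2)).1 hsq
    omega
  exact (a * q ^ i).ne_zero (CharZero.eq_neg_self_iff.1 (congrArg Units.val h))

lemma not_isOfFinOrder_of_pow_ne_one {M : Type*} [Monoid M] {q : Mˣ}
    (hq : ∀ n : ℕ, 0 < n → (q : M) ^ n ≠ 1) : ¬IsOfFinOrder q := by
  rw [isOfFinOrder_iff_pow_eq_one]
  rintro ⟨n, hn, h⟩
  exact hq n hn (by rw [← Units.val_pow_eq_pow_val, h, Units.val_one])

lemma Z_apply (c b : ℂˣ) : Z c b = if c = b then 1 else 0 := Finsupp.single_apply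

lemma A_mul_zpow (q a : ℂˣ) (j : ℤ) :
    A q (a * q ^ j) = Z (a * q ^ (j + 1)) + Z (a * q ^ (j - 1)) - Z (-(a * q ^ j)) := by
  rw [A, mul_assoc, mul_assoc, ← zpow_add_one, ← zpow_sub_one]

lemma A_neg_mul_zpow (q a : ℂˣ) (j : ℤ) :
    A q (-(a * q ^ j)) = Z (-(a * q ^ (j + 1))) + Z (-(a * q ^ (j - 1))) - Z (a * q ^ j) := by
  rw [A, neg_neg, neg_mul, neg_mul, mul_assoc, mul_assoc, ← zpow_add_one, ← zpow_sub_one]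

lemma mKR_eq_sum_zpow (q : ℂˣ) (k : ℕ) (a : ℂˣ) :
    mKR q k a = ∑ s ∈ range k, Z (a * q ^ (2 * (s : ℤ))) := by
  simp only [mKR, ← zpow_natCast, Nat.cast_mul, Nat.cast_ofNat]

lemma mKR_nonneg (q : ℂˣ) (k : ℕ) (a b : ℂˣ) : 0 ≤ mKR q k a b := by
  rw [mKR, Finsupp.finsetSum_apply]
  exact sum_nonneg fun s _ => by rw [Z_apply]; split_ifs <;> omega

section

variable {q : ℂˣ} (hq : ¬IsOfFinOrder q) (a : ℂˣ)
include hq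

lemma Z_mul_zpow_apply (i j : ℤ) : Z (a * q ^ i) (a * q ^ j) = if i = j then 1 else 0 := by
  simp only [Z_apply, mul_zpow_inj hq]

lemma Z_neg_apply_neg (i j : ℤ) :
    Z (-(a * q ^ i)) (-(a * q ^ j)) = if i = j then 1 else 0 := by
  simp only [Z_apply, neg_inj, mul_zpow_inj hq]

lemma Z_mul_zpow_apply_neg (i j : ℤ) : Z (a * q ^ i) (-(a * q ^ j)) = 0 := by
  rw [Z_apply, if_neg (mul_zpow_ne_neg hq a i j)]

lemma Z_neg_apply_mul_zpow (i j : ℤ) : Z (-(a * q ^ i)) (a * q ^ j) = 0 := by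
  rw [Z_apply, if_neg (mul_zpow_ne_neg hq a j i).symm]

end

def KRmonomial (q : ℂˣ) (k : ℕ) (a : ℂˣ) (R R' : ℕ) : Mon :=
  mKR q k a
    - ∑ r ∈ range R, A q (a * q ^ (2 * (k : ℤ) + 1 - 2 * ((r : ℤ) + 1)))
    - ∑ r' ∈ range R', A q (-(a * q ^ (2 * (k : ℤ) + 2 - 2 * ((r' : ℤ) + 1))))

lemma KRmonomial_zero_zero (q : ℂˣ) (k : ℕ) (a : ℂˣ) : KRmonomial q k a 0 0 = mKR q k a := by
  simp [KRmonomial]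

lemma coeff_FKR (q : ℂˣ) (k : ℕ) (a : ℂˣ) (m : Mon) :
    (FKR q k a).coeff m =
      ∑ R ∈ range (k + 1), ∑ R' ∈ range (R + 1), if KRmonomial q k a R R' = m then 1 else 0 := by
  simp only [FKR, KRmonomial, AddMonoidAlgebra.coeff_sum, AddMonoidAlgebra.coeff_single,
    Finsupp.finsetSum_apply, Finsupp.single_apply]
  rfl

section

variable {q : ℂˣ} (hq : ¬IsOfFinOrder q) (a : ℂˣ) (k : ℕ)
include hq

lemma KRmonomial_apply_of_right_eq_zero {R : ℕ} (hR : 0 < R) :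
    KRmonomial q k a R 0 (a * q ^ (2 * (k : ℤ))) = -1 := by
  have hmKR : mKR q k a (a * q ^ (2 * (k : ℤ))) = 0 := by
    rw [mKR_eq_sum_zpow, Finsupp.finsetSum_apply]
    refine sum_eq_zero fun s hs => ?_
    rw [Z_mul_zpow_apply hq, if_neg (by simp at hs; omega)]
  have hA : ∀ r ∈ range R,
      A q (a * q ^ (2 * (k : ℤ) + 1 - 2 * ((r : ℤ) + 1))) (a * q ^ (2 * (k : ℤ))) =
        if r = 0 then 1 else 0 := by
    intro r _
    simp only [A_mul_zpow, Finsupp.add_apply, Finsupp.sub_apply, Z_mul_zpow_apply hq,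
      Z_neg_apply_mul_zpow hq]
    split_ifs <;> omega
  simp [KRmonomial, hmKR, sum_congr rfl hA, hR]

lemma KRmonomial_apply_of_right_pos (R : ℕ) {R' : ℕ} (hR' : 0 < R') :
    KRmonomial q k a R R' (-(a * q ^ (2 * (k : ℤ) + 1))) = -1 := by
  have hmKR : mKR q k a (-(a * q ^ (2 * (k : ℤ) + 1))) = 0 := by
    rw [mKR_eq_sum_zpow, Finsupp.finsetSum_apply]
    exact sum_eq_zero fun s _ => Z_mul_zpow_apply_neg hq a _ _
  have hA : ∀ r ∈ range R,
      A q (a * q ^ (2 * (k : ℤ) + 1 - 2 * ((r : ℤ) + 1))) (-(a * q ^ (2 * (k : ℤ) + 1))) = 0 := by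
    intro r _
    simp only [A_mul_zpow, Finsupp.add_apply, Finsupp.sub_apply, Z_mul_zpow_apply_neg hq,
      Z_neg_apply_neg hq]
    split_ifs <;> omega
  have hA' : ∀ r' ∈ range R',
      A q (-(a * q ^ (2 * (k : ℤ) + 2 - 2 * ((r' : ℤ) + 1)))) (-(a * q ^ (2 * (k : ℤ) + 1))) =
        if r' = 0 then 1 else 0 := by
    intro r' _
    simp only [A_neg_mul_zpow, Finsupp.add_apply, Finsupp.sub_apply, Z_mul_zpow_apply_neg hq,
      Z_neg_apply_neg hq]
    split_ifs <;> omega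
  simp [KRmonomial, hmKR, sum_congr rfl hA, sum_congr rfl hA', hR']

lemma exists_KRmonomial_apply_neg {R R' : ℕ} (h : ¬(R = 0 ∧ R' = 0)) :
    ∃ b, KRmonomial q k a R R' b < 0 := by
  rcases R'.eq_zero_or_pos with rfl | hR'
  · exact ⟨_, (KRmonomial_apply_of_right_eq_zero hq a k (by omega)).trans_lt (by norm_num)⟩
  · exact ⟨_, (KRmonomial_apply_of_right_pos hq a k R hR').trans_lt (by norm_num)⟩

lemma KRmonomial_eq_mKR_iff {R R' : ℕ} : KRmonomial q k a R R' = mKR q k a ↔ R = 0 ∧ R' = 0 := by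
  refine ⟨fun h => ?_, fun ⟨hR, hR'⟩ => hR ▸ hR' ▸ KRmonomial_zero_zero q k a⟩
  by_contra hRR'
  obtain ⟨b, hb⟩ := exists_KRmonomial_apply_neg hq a k hRR'
  exact hb.not_ge (h ▸ mKR_nonneg q k a b)

lemma eq_mKR_of_dominant {R R' : ℕ} {m : Mon} (hm : KRmonomial q k a R R' = m)
    (hdom : ∀ b, 0 ≤ m b) : m = mKR q k a := by
  subst hm
  by_contra hne
  obtain ⟨b, hb⟩ := exists_KRmonomial_apply_neg hq a k (mt (KRmonomial_eq_mKR_iff hq a k).2 hne)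
  exact hb.not_ge (hdom b)

end

theorem KR_special_A2_2_general (q : ℂˣ) (hq : ∀ n : ℕ, 0 < n → (q : ℂ) ^ n ≠ 1)
    (a : ℂˣ) (k : ℕ) :
    (∀ R R' : ℕ, R' ≤ R → R ≤ k → ¬(R = 0 ∧ R' = 0) →
      ∃ b : ℂˣ,
        (mKR q k a
          - ∑ r ∈ Finset.range R, A q (a * q ^ (2 * (k : ℤ) + 1 - 2 * ((r : ℤ) + 1)))
          - ∑ r' ∈ Finset.range R',
              A q (-(a * q ^ (2 * (k : ℤ) + 2 - 2 * ((r' : ℤ) + 1))))) b < 0)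
    ∧ (∀ m : Mon, (FKR q k a).coeff m ≠ 0 → (∀ b : ℂˣ, 0 ≤ m b) → m = mKR q k a)
    ∧ (FKR q k a).coeff (mKR q k a) = 1 := by
  have hq' := not_isOfFinOrder_of_pow_ne_one hq
  refine ⟨fun R R' _ _ h => exists_KRmonomial_apply_neg hq' a k h, fun m hm hdom => ?_, ?_⟩
  · rw [coeff_FKR] at hm
    obtain ⟨R, -, hR⟩ := exists_ne_zero_of_sum_ne_zero hm
    obtain ⟨R', -, hR'⟩ := exists_ne_zero_of_sum_ne_zero hR
    exact eq_mKR_of_dominant hq' a k (of_not_not fun h => hR' (if_neg h)) hdom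
  · simp [coeff_FKR, KRmonomial_eq_mKR_iff hq', ite_and]

/-- The Kirillov–Reshetikhin modules of the twisted quantum loop algebra of type `A₂⁽²⁾`
are special: every monomial `m_{k,a} ∏ A⁻¹` with `(R,R') ≠ (0,0)` has a strictly negative
exponent at some variable, so `m_{k,a}` is the unique dominant monomial of `F_k(a)`
and it occurs with coefficient `1`. -/
theorem KR_special_A2_2 (q : ℂˣ) (hq : ∀ n : ℕ, 0 < n → (q : ℂ) ^ n ≠ 1)
    (a : ℂˣ) (k : ℕ) (hk : 1 ≤ k) :
    (∀ R R' : ℕ, R' ≤ R → R ≤ k → ¬(R = 0 ∧ R' = 0) →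
      ∃ b : ℂˣ,
        (mKR q k a
          - ∑ r ∈ Finset.range R, A q (a * q ^ (2 * (k : ℤ) + 1 - 2 * ((r : ℤ) + 1)))
          - ∑ r' ∈ Finset.range R',
              A q (-(a * q ^ (2 * (k : ℤ) + 2 - 2 * ((r' : ℤ) + 1))))) b < 0)
    ∧ (∀ m : Mon, (FKR q k a).coeff m ≠ 0 → (∀ b : ℂˣ, 0 ≤ m b) → m = mKR q k a)
    ∧ (FKR q k a).coeff (mKR q k a) = 1 :=
  KR_special_A2_2_general q hq a k
end
end

section
/- Let K ⊆ R be the subring generated by the elements F_1(b) = Z_b + Z_{−bq}Z_{bq²}^{-1} + Z_{−bq³}^{-1} for all b ∈ ℂ∖{0} (the twisted q-characters of the fundamental representations of the twisted quantum loop algebra of type A_2^{(2)}). Then every nonzero element of K has at least one dominant monomial in its support, i.e. some monomial m with nonzero coefficient satisfying z_a(m) ≥ 0 for all a ∈ ℂ∖{0}. -/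
/-!
Grade monomials by total degree. The top-degree part of `F₁(b)` is the single monomial `Z_b`,
so the top-degree part of a product `F₁(b₁) ⋯ F₁(bₙ)` is the single monomial `Z_{b₁} ⋯ Z_{bₙ}`,
which is dominant and determines the multiset `{b₁, …, bₙ}`. Write an element of `K` as a
ℤ-combination of distinct such products: the top monomial of a product with the most factors
occurs in no other product of the combination, so it keeps its nonzero coefficient.
-/

noncomputable section

/-- The twisted q-character of the fundamental representation:
`F₁(b) = Z_b + Z_{-bq} Z_{bq²}⁻¹ + Z_{-bq³}⁻¹`. -/
def F1 (q b : ℂˣ) : LR :=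
  AddMonoidAlgebra.single (Z b) 1
    + AddMonoidAlgebra.single (Z (-(b * q)) - Z (b * q ^ 2)) 1
    + AddMonoidAlgebra.single (-Z (-(b * q ^ 3))) 1

/-- The subring `K ⊆ R` generated by the twisted q-characters of the fundamental
representations of the twisted quantum loop algebra of type `A₂⁽²⁾`. -/
def Ksub (q : ℂˣ) : Subring LR := Subring.closure (Set.range fun b : ℂˣ => F1 q b)

open AddMonoidAlgebra Finsupp
open scoped Pointwise

section TopMonomial

variable {R σ : Type*} [Semiring R]

structure HasTopMonomial (f : AddMonoidAlgebra R (σ →₀ ℤ)) (m : σ →₀ ℤ) : Prop where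
  coeff_self : f.coeff m = 1
  coeff_eq_zero : ∀ m', degree m ≤ degree m' → m' ≠ m → f.coeff m' = 0

namespace HasTopMonomial

variable {f g : AddMonoidAlgebra R (σ →₀ ℤ)} {m n x : σ →₀ ℤ}

lemma eq_of_coeff_ne_zero (hf : HasTopMonomial f m) (hx : f.coeff x ≠ 0)
    (hle : degree m ≤ degree x) : x = m :=
  by_contra fun hne => hx (hf.coeff_eq_zero x hle hne)

lemma degree_le_of_coeff_ne_zero (hf : HasTopMonomial f m) (hx : f.coeff x ≠ 0) :
    degree x ≤ degree m := by
  by_contra! hlt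
  exact hlt.ne' (congrArg degree (hf.eq_of_coeff_ne_zero hx hlt.le))

lemma mul (hf : HasTopMonomial f m) (hg : HasTopMonomial g n) :
    HasTopMonomial (f * g) (m + n) := by
  classical
  have hsplit : ∀ x y, f.coeff x ≠ 0 → g.coeff y ≠ 0 → degree (m + n) ≤ degree (x + y) →
      x = m ∧ y = n := by
    intro x y hx hy hxy
    have hdx := hf.degree_le_of_coeff_ne_zero hx
    have hdy := hg.degree_le_of_coeff_ne_zero hy
    rw [map_add, map_add] at hxy
    exact ⟨hf.eq_of_coeff_ne_zero hx (by omega), hg.eq_of_coeff_ne_zero hy (by omega)⟩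
  constructor
  · rw [coeff_mul, Finsupp.sum_eq_single m, Finsupp.sum_eq_single n, if_pos rfl, hf.coeff_self,
      hg.coeff_self, one_mul]
    · exact fun y _ hyn => if_neg fun hy => hyn (add_left_cancel hy)
    · simp
    · refine fun x hx hxm => Finset.sum_eq_zero fun y hy => if_neg fun hxy => hxm ?_
      exact (hsplit x y hx (mem_support_iff.mp hy) (hxy ▸ le_rfl)).1
    · simp
  · intro m' hle hne
    rw [coeff_mul]
    refine Finset.sum_eq_zero fun x hx => Finset.sum_eq_zero fun y hy => if_neg fun hxy => ?_
    obtain ⟨rfl, rfl⟩ := hsplit x y (mem_support_iff.mp hx) (mem_support_iff.mp hy) (hxy ▸ hle)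
    exact hne hxy.symm

end HasTopMonomial

lemma hasTopMonomial_one : HasTopMonomial (1 : AddMonoidAlgebra R (σ →₀ ℤ)) 0 where
  coeff_self := coeff_one_zero
  coeff_eq_zero m' _ hne := by
    classical
    rw [one_def, coeff_single, Finsupp.single_apply, if_neg hne.symm]

end TopMonomial

section Multiset

variable {R σ ι : Type*} [CommSemiring R]

lemma hasTopMonomial_multiset_prod {F : ι → AddMonoidAlgebra R (σ →₀ ℤ)} {M : ι → σ →₀ ℤ}
    (T : Multiset ι) (hT : ∀ i ∈ T, HasTopMonomial (F i) (M i)) :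
    HasTopMonomial (T.map F).prod (T.map M).sum := by
  induction T using Multiset.induction_on with
  | empty => exact hasTopMonomial_one
  | cons i T ih =>
    rw [Multiset.map_cons, Multiset.map_cons, Multiset.prod_cons, Multiset.sum_cons]
    exact (hT i (Multiset.mem_cons_self i T)).mul
      (ih fun j hj => hT j (Multiset.mem_cons_of_mem hj))

def monomialOf (T : Multiset σ) : σ →₀ ℤ := (T.map fun b => Finsupp.single b 1).sum

lemma monomialOf_apply [DecidableEq σ] (T : Multiset σ) (b : σ) :
    monomialOf T b = T.count b := by
  induction T using Multiset.induction_on with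
  | empty => simp [monomialOf]
  | cons a T ih =>
    simp_all [monomialOf, Multiset.count_cons, single_apply, eq_comm, add_comm]

lemma monomialOf_injective : Function.Injective (monomialOf (σ := σ)) := by
  classical
  intro T T' h
  ext b
  have := DFunLike.congr_fun h b
  rwa [monomialOf_apply, monomialOf_apply, Nat.cast_inj] at this

lemma degree_monomialOf (T : Multiset σ) : degree (monomialOf T) = T.card := by
  simp [monomialOf, map_multiset_sum, Multiset.map_map]

end Multiset

lemma mem_span_multiset_prod_of_mem_closure {A ι : Type*} [CommRing A] {F : ι → A} {x : A}
    (hx : x ∈ Subring.closure (Set.range F)) :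
    x ∈ Submodule.span ℤ (Set.range fun T : Multiset ι => (T.map F).prod) := by
  set S := Set.range fun T : Multiset ι => (T.map F).prod
  have hSS : S * S ⊆ S := Set.mul_subset_iff.mpr <| by
    rintro _ ⟨T, rfl⟩ _ ⟨T', rfl⟩
    exact ⟨T + T', by simp only [Multiset.map_add, Multiset.prod_add]⟩
  induction hx using Subring.closure_induction with
  | mem _ hy =>
    obtain ⟨b, rfl⟩ := hy
    exact Submodule.subset_span ⟨{b}, by simp⟩
  | zero => exact zero_mem _
  | one => exact Submodule.subset_span ⟨0, by simp⟩
  | add _ _ _ _ hy hz => exact add_mem hy hz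
  | neg _ _ hy => exact neg_mem hy
  | mul _ _ _ _ hy hz =>
    exact Submodule.span_mono hSS (Submodule.span_mul_span ℤ S S ▸ Submodule.mul_mem_mul hy hz)

section Combination

variable {R σ : Type*} [CommSemiring R] {F : σ → AddMonoidAlgebra R (σ →₀ ℤ)}

lemma coeff_sum_smul_prod_monomialOf (hF : ∀ b, HasTopMonomial (F b) (Finsupp.single b 1))
    (c : Multiset σ →₀ R) {T₀ : Multiset σ} (hT₀ : T₀ ∈ c.support)
    (hmax : ∀ T ∈ c.support, T.card ≤ T₀.card) :
    (c.sum fun T r => r • (T.map F).prod).coeff (monomialOf T₀) = c T₀ := by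
  have htop (T : Multiset σ) : HasTopMonomial (T.map F).prod (monomialOf T) :=
    hasTopMonomial_multiset_prod T fun b _ => hF b
  rw [coeff_finsuppSum, Finsupp.sum, Finsupp.finsetSum_apply, Finset.sum_eq_single T₀]
  · rw [coeff_smul_apply, (htop T₀).coeff_self, smul_eq_mul, mul_one]
  · intro T hT hne
    rw [coeff_smul_apply, (htop T).coeff_eq_zero _ (by simpa [degree_monomialOf] using hmax T hT)
      (monomialOf_injective.ne hne.symm), smul_zero]
  · exact fun h => (h hT₀).elim

end Combination

theorem exists_dominant_coeff_ne_zero_of_mem_closure {σ : Type*}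
    {F : σ → AddMonoidAlgebra ℤ (σ →₀ ℤ)} (hF : ∀ b, HasTopMonomial (F b) (Finsupp.single b 1))
    {x : AddMonoidAlgebra ℤ (σ →₀ ℤ)} (hx : x ∈ Subring.closure (Set.range F)) (hx0 : x ≠ 0) :
    ∃ m : σ →₀ ℤ, x.coeff m ≠ 0 ∧ ∀ b, 0 ≤ m b := by
  classical
  obtain ⟨c, rfl⟩ :=
    Finsupp.mem_span_range_iff_exists_finsupp.mp (mem_span_multiset_prod_of_mem_closure hx)
  have hc : c.support.Nonempty := Finsupp.support_nonempty_iff.mpr (by rintro rfl; simp at hx0)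
  obtain ⟨T₀, hT₀, hmax⟩ := c.support.exists_max_image Multiset.card hc
  refine ⟨monomialOf T₀, ?_, fun b => ?_⟩
  · rw [coeff_sum_smul_prod_monomialOf hF c hT₀ hmax]
    exact mem_support_iff.mp hT₀
  · rw [monomialOf_apply]
    positivity

lemma coeff_F1_of_one_le_degree (q b : ℂˣ) {m : Mon} (hm : 1 ≤ degree m) :
    (F1 q b).coeff m = Finsupp.single (Z b) 1 m := by
  have h₂ : Z (-(b * q)) - Z (b * q ^ 2) ≠ m := by
    rintro rfl
    simp [Z] at hm
  have h₃ : -Z (-(b * q ^ 3)) ≠ m := by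
    rintro rfl
    simp [Z] at hm
  simp [F1, Finsupp.single_apply, h₂, h₃]

lemma hasTopMonomial_F1 (q b : ℂˣ) : HasTopMonomial (F1 q b) (Z b) := by
  have hZ : degree (Z b) = 1 := degree_single b 1
  refine ⟨?_, fun m hm hne => ?_⟩
  · rw [coeff_F1_of_one_le_degree q b hZ.ge, single_eq_same]
  · rw [coeff_F1_of_one_le_degree q b (hZ ▸ hm), single_eq_of_ne hne]

theorem dominant_monomial_exists_general (q : ℂˣ)
    (x : LR) (hx : x ∈ Ksub q) (hx0 : x ≠ 0) :
    ∃ m : Mon, x.coeff m ≠ 0 ∧ ∀ b : ℂˣ, 0 ≤ m b :=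
  exists_dominant_coeff_ne_zero_of_mem_closure (hasTopMonomial_F1 q) hx hx0

/-- Every nonzero element of the subring generated by the `F₁(b)` has at least one
dominant monomial in its support. -/
theorem dominant_monomial_exists (q : ℂˣ) (hq : ∀ n : ℕ, 0 < n → (q : ℂ) ^ n ≠ 1)
    (x : LR) (hx : x ∈ Ksub q) (hx0 : x ≠ 0) :
    ∃ m : Mon, x.coeff m ≠ 0 ∧ ∀ b : ℂˣ, 0 ≤ m b :=
  dominant_monomial_exists_general q x hx hx0
end
end

section
/- The operators X_0^±, X_1^±, K_0^{±1}, K_1^{±1} defined in the context satisfy all the defining relations of the twisted quantum loop algebra U_q^τ of type A_2^{(2)}: K_1 = K_0^{-2}; K_0X_1^+K_0^{-1} = q^{-2}X_1^+; K_0X_0^+K_0^{-1} = qX_0^+; K_0X_1^-K_0^{-1} = q²X_1^-; K_0X_0^-K_0^{-1} = q^{-1}X_0^-; [X_1^+,X_0^-] = [X_0^+,X_1^-] = 0; [X_0^+,X_0^-] = (K_0−K_0^{-1})/(t−t^{-1}); [X_1^+,X_1^-] = (K_1−K_1^{-1})/(q²−q^{-2}); the quantum Serre relations X_0^ε(X_1^ε)²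 − (q²+q^{-2})X_1^εX_0^εX_1^ε + (X_1^ε)²X_0^ε = 0 and Σ_{r=0}^{5} (−1)^r (X_0^ε)^{5−r}X_1^ε(X_0^ε)^{r}/([5−r]_t!·[r]_t!) = 0 for both ε ∈ {+,−}. Hence these operators define a 3-dimensional representation of U_q^τ on ℂ³ (the fundamental representation V_a, whose Drinfeld polynomial is P(u) = 1 − aq^{-1}u). -/
noncomputable section

/-- The t-integer `[n]_t = (tⁿ - t⁻ⁿ)/(t - t⁻¹)`. -/
def tnum (t : ℂ) (n : ℕ) : ℂ := (t ^ n - t⁻¹ ^ n) / (t - t⁻¹)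

/-- The t-factorial `[n]_t! = [n]_t [n-1]_t ⋯ [1]_t`. -/
def tfac (t : ℂ) (n : ℕ) : ℂ := ∏ i ∈ Finset.range n, tnum t (i + 1)

/-- The operator `X₀⁺` on `ℂ³`: `v₀ ↦ 0`, `v₁ ↦ [2]_t v₀`, `v₂ ↦ [2]_t v₁`. -/
def X0p (t : ℂ) : Matrix (Fin 3) (Fin 3) ℂ :=
  !![0, tnum t 2, 0; 0, 0, tnum t 2; 0, 0, 0]

/-- The operator `X₀⁻` on `ℂ³`: `v₀ ↦ v₁`, `v₁ ↦ v₂`, `v₂ ↦ 0`. -/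
def X0m : Matrix (Fin 3) (Fin 3) ℂ :=
  !![0, 0, 0; 1, 0, 0; 0, 1, 0]

/-- The operator `K₀ = diag(q, 1, q⁻¹)` on `ℂ³`, with `q = t²`. -/
def K0 (t : ℂ) : Matrix (Fin 3) (Fin 3) ℂ :=
  !![t ^ 2, 0, 0; 0, 1, 0; 0, 0, (t ^ 2)⁻¹]

/-- The operator `X₁⁺` on `ℂ³`: `v₀ ↦ [4]_t⁻¹ q a (1+q²) v₂`, `v₁, v₂ ↦ 0`. -/
def X1p (t a : ℂ) : Matrix (Fin 3) (Fin 3) ℂ :=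
  !![0, 0, 0; 0, 0, 0; (tnum t 4)⁻¹ * t ^ 2 * a * (1 + (t ^ 2) ^ 2), 0, 0]

/-- The operator `X₁⁻` on `ℂ³`: `v₂ ↦ [4]_t⁻¹ q⁻¹ [2]_t² a⁻¹ (1+q⁻²) v₀`, `v₀, v₁ ↦ 0`. -/
def X1m (t a : ℂ) : Matrix (Fin 3) (Fin 3) ℂ :=
  !![0, 0, (tnum t 4)⁻¹ * (t ^ 2)⁻¹ * (tnum t 2) ^ 2 * a⁻¹ * (1 + ((t ^ 2)⁻¹) ^ 2);
     0, 0, 0; 0, 0, 0]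

/-- The operator `K₁ = diag(q⁻², 1, q²)` on `ℂ³`, with `q = t²`. -/
def K1 (t : ℂ) : Matrix (Fin 3) (Fin 3) ℂ :=
  !![((t ^ 2) ^ 2)⁻¹, 0, 0; 0, 1, 0; 0, 0, (t ^ 2) ^ 2]

/-!
`K₀` and `K₁` are diagonal, and each `X` is supported on positions whose `K₀`-weights have
a fixed ratio, so conjugation by `K₀` multiplies it by that ratio. Both commutators are
diagonal: `[X₀⁺, X₀⁻]` reduces to `[2]_t = (q - q⁻¹)/(t - t⁻¹)`, and `[X₁⁺, X₁⁻]` to the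
product of the corner entries of `X₁⁺` and `X₁⁻` being `1`, which is
`[4]_t = [2]_t (q + q⁻¹)`. The Serre relations hold termwise: `(X₀^±)³ = 0`, `(X₁^±)² = 0`
and `X₁^± X₀^± X₁^± = 0`, and every term of the quintic relation contains `(X₀^±)^k` with
`k ≥ 3`.
-/

open Matrix Finset

theorem sub_inv_pow_ne_zero {K : Type*} [Field K] {t : K} (ht0 : t ≠ 0) {n : ℕ}
    (htn : t ^ (2 * n) ≠ 1) : t ^ n - t⁻¹ ^ n ≠ 0 := by
  rw [sub_ne_zero, inv_pow]
  intro h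
  apply htn
  rw [two_mul, pow_add]
  nth_rewrite 2 [h]
  exact mul_inv_cancel₀ (pow_ne_zero n ht0)

theorem Matrix.inv_diagonal_of_ne_zero {n K : Type*} [Fintype n] [DecidableEq n] [Field K]
    {d : n → K} (hd : ∀ i, d i ≠ 0) : (diagonal d)⁻¹ = diagonal d⁻¹ :=
  inv_eq_left_inv <| by
    rw [diagonal_mul_diagonal, ← diagonal_one]
    exact congrArg diagonal (funext fun i => inv_mul_cancel₀ (hd i))

theorem Matrix.diagonal_mul_mul_inv_diagonal {n K : Type*} [Fintype n] [DecidableEq n]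
    [Field K] {d : n → K} (hd : ∀ i, d i ≠ 0) {M : Matrix n n K} {c : K}
    (h : ∀ i j, d i * M i j = c * M i j * d j) :
    diagonal d * M * (diagonal d)⁻¹ = c • M := by
  ext i j
  rw [inv_diagonal_of_ne_zero hd, mul_diagonal, diagonal_mul, h, Pi.inv_apply,
    mul_inv_cancel_right₀ (hd j), smul_apply, smul_eq_mul]

theorem sum_smul_pow_mul_mul_pow_eq_zero {R A : Type*} [Semiring A] [SMulZeroClass R A]
    {x : A} {m : ℕ} (hx : x ^ m = 0) {n : ℕ} (hn : 2 * m ≤ n + 1) (y : A) (c : ℕ → R) :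
    ∑ r ∈ range (n + 1), c r • (x ^ (n - r) * y * x ^ r) = 0 := by
  refine sum_eq_zero fun r _ => ?_
  rcases le_or_gt m r with hmr | hrm
  · rw [pow_eq_zero_of_le hmr hx, mul_zero, smul_zero]
  · rw [pow_eq_zero_of_le (by grind) hx, zero_mul, zero_mul, smul_zero]

section

variable (t a : ℂ)

theorem tnum_four : tnum t 4 = tnum t 2 * (t ^ 2 + (t ^ 2)⁻¹) := by
  unfold tnum; ring

theorem tnum_ne_zero (ht0 : t ≠ 0) (ht : ∀ n : ℕ, 0 < n → t ^ n ≠ 1) {n : ℕ} (hn : 0 < n) :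
    tnum t n ≠ 0 := by
  refine div_ne_zero (sub_inv_pow_ne_zero ht0 (ht _ (by omega))) ?_
  simpa using sub_inv_pow_ne_zero (n := 1) ht0 (ht 2 two_pos)

theorem K0_eq_diagonal : K0 t = diagonal ![t ^ 2, 1, (t ^ 2)⁻¹] := by
  ext i j; fin_cases i <;> fin_cases j <;> rfl

theorem K1_eq_diagonal : K1 t = diagonal ![((t ^ 2) ^ 2)⁻¹, 1, (t ^ 2) ^ 2] := by
  ext i j; fin_cases i <;> fin_cases j <;> rfl

theorem K0_inv (ht0 : t ≠ 0) : (K0 t)⁻¹ = diagonal ![(t ^ 2)⁻¹, 1, t ^ 2] := by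
  rw [K0_eq_diagonal, inv_diagonal_of_ne_zero]
  · congr 1; ext i; fin_cases i <;> simp
  · intro i; fin_cases i <;> simp [ht0]

theorem K1_inv (ht0 : t ≠ 0) : (K1 t)⁻¹ = diagonal ![(t ^ 2) ^ 2, 1, ((t ^ 2) ^ 2)⁻¹] := by
  rw [K1_eq_diagonal, inv_diagonal_of_ne_zero]
  · congr 1; ext i; fin_cases i <;> simp
  · intro i; fin_cases i <;> simp [ht0]

theorem K1_eq_K0_inv_sq (ht0 : t ≠ 0) : K1 t = (K0 t)⁻¹ * (K0 t)⁻¹ := by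
  rw [K0_inv t ht0, diagonal_mul_diagonal, K1_eq_diagonal]
  congr 1; ext i; fin_cases i <;> simp <;> ring

theorem K0_mul_X0p_mul_K0_inv (ht0 : t ≠ 0) :
    K0 t * X0p t * (K0 t)⁻¹ = t ^ 2 • X0p t := by
  rw [K0_eq_diagonal]
  refine diagonal_mul_mul_inv_diagonal (fun i => by fin_cases i <;> simp [ht0]) fun i j => ?_
  fin_cases i <;> fin_cases j <;> simp [X0p]
  field_simp

theorem K0_mul_X0m_mul_K0_inv (ht0 : t ≠ 0) :
    K0 t * X0m * (K0 t)⁻¹ = (t ^ 2)⁻¹ • X0m := by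
  rw [K0_eq_diagonal]
  refine diagonal_mul_mul_inv_diagonal (fun i => by fin_cases i <;> simp [ht0]) fun i j => ?_
  fin_cases i <;> fin_cases j <;> simp [X0m, ht0]

theorem K0_mul_X1p_mul_K0_inv (ht0 : t ≠ 0) :
    K0 t * X1p t a * (K0 t)⁻¹ = ((t ^ 2) ^ 2)⁻¹ • X1p t a := by
  rw [K0_eq_diagonal]
  refine diagonal_mul_mul_inv_diagonal (fun i => by fin_cases i <;> simp [ht0]) fun i j => ?_
  fin_cases i <;> fin_cases j <;> simp [X1p]
  field_simp

theorem K0_mul_X1m_mul_K0_inv (ht0 : t ≠ 0) :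
    K0 t * X1m t a * (K0 t)⁻¹ = (t ^ 2) ^ 2 • X1m t a := by
  rw [K0_eq_diagonal]
  refine diagonal_mul_mul_inv_diagonal (fun i => by fin_cases i <;> simp [ht0]) fun i j => ?_
  fin_cases i <;> fin_cases j <;> simp [X1m]
  field_simp

theorem X0p_pow_three : X0p t ^ 3 = 0 := by
  ext i j
  fin_cases i <;> fin_cases j <;> simp [X0p, pow_succ, mul_apply, Fin.sum_univ_three]

theorem X0m_pow_three : X0m ^ 3 = 0 := by
  ext i j
  fin_cases i <;> fin_cases j <;> simp [X0m, pow_succ, mul_apply, Fin.sum_univ_three]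

theorem X1p_sq : X1p t a ^ 2 = 0 := by
  ext i j
  fin_cases i <;> fin_cases j <;> simp [X1p, sq, mul_apply, Fin.sum_univ_three]

theorem X1m_sq : X1m t a ^ 2 = 0 := by
  ext i j
  fin_cases i <;> fin_cases j <;> simp [X1m, sq, mul_apply, Fin.sum_univ_three]

theorem X1p_mul_X0p_mul_X1p : X1p t a * X0p t * X1p t a = 0 := by
  ext i j
  fin_cases i <;> fin_cases j <;> simp [X1p, X0p, mul_apply, Fin.sum_univ_three]

theorem X1m_mul_X0m_mul_X1m : X1m t a * X0m * X1m t a = 0 := by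
  ext i j
  fin_cases i <;> fin_cases j <;> simp [X1m, X0m, mul_apply, Fin.sum_univ_three]

theorem X1p_mul_X0m_comm : X1p t a * X0m = X0m * X1p t a := by
  ext i j
  fin_cases i <;> fin_cases j <;> simp [X1p, X0m, mul_apply, Fin.sum_univ_three]

theorem X0p_mul_X1m_comm : X0p t * X1m t a = X1m t a * X0p t := by
  ext i j
  fin_cases i <;> fin_cases j <;> simp [X0p, X1m, mul_apply, Fin.sum_univ_three]

theorem X1p_apply_mul_X1m_apply (ht0 : t ≠ 0) (ha : a ≠ 0) (h4 : tnum t 4 ≠ 0) :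
    X1p t a 2 0 * X1m t a 0 2 = 1 :=
  calc X1p t a 2 0 * X1m t a 0 2
      = (tnum t 2 * (t ^ 2 + (t ^ 2)⁻¹)) ^ 2 / tnum t 4 ^ 2 := by
        simp only [X1p, X1m, of_apply, Matrix.cons_val]
        field_simp
        ring
    _ = 1 := by rw [← tnum_four, div_self (pow_ne_zero 2 h4)]

theorem X0p_X0m_commutator (ht0 : t ≠ 0) :
    X0p t * X0m - X0m * X0p t = (t - t⁻¹)⁻¹ • (K0 t - (K0 t)⁻¹) := by
  have hdiag : X0p t * X0m - X0m * X0p t = diagonal ![tnum t 2, 0, -tnum t 2] := by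
    ext i j
    fin_cases i <;> fin_cases j <;> simp [X0p, X0m]
  rw [hdiag, K0_inv t ht0, K0_eq_diagonal, diagonal_sub, ← diagonal_smul]
  congr 1; ext i; fin_cases i <;> simp [tnum] <;> ring

theorem X1p_X1m_commutator (ht0 : t ≠ 0) (ht : ∀ n : ℕ, 0 < n → t ^ n ≠ 1) (ha : a ≠ 0) :
    X1p t a * X1m t a - X1m t a * X1p t a =
      ((t ^ 2) ^ 2 - ((t ^ 2) ^ 2)⁻¹)⁻¹ • (K1 t - (K1 t)⁻¹) := by
  have hdiag : X1p t a * X1m t a - X1m t a * X1p t a =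
      (X1p t a 2 0 * X1m t a 0 2) • diagonal ![-1, 0, 1] := by
    ext i j
    fin_cases i <;> fin_cases j <;> simp [X1p, X1m, mul_comm]
  have hq : (t ^ 2) ^ 2 - ((t ^ 2) ^ 2)⁻¹ ≠ 0 := by
    simpa [← pow_mul] using sub_inv_pow_ne_zero (n := 4) ht0 (ht 8 (by norm_num))
  rw [hdiag, X1p_apply_mul_X1m_apply t a ht0 ha (tnum_ne_zero t ht0 ht four_pos), one_smul,
    K1_inv t ht0, K1_eq_diagonal, diagonal_sub, ← diagonal_smul]
  congr 1; ext i; fin_cases i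
  · simp only [Fin.zero_eta, Pi.smul_apply, cons_val_zero, smul_eq_mul]
    rw [← neg_sub ((t ^ 2) ^ 2), mul_neg, inv_mul_cancel₀ hq]
  · simp
  · simp [hq]

end

/-- The operators `X₀±, X₁±, K₀±¹, K₁±¹` on `ℂ³` satisfy all the defining relations of the
twisted quantum loop algebra `U_q^τ` of type `A₂⁽²⁾` (with `q = t²`), hence define a
3-dimensional representation of `U_q^τ` (the fundamental representation `V_a`). -/
theorem fundamental_rep_relations_A2_2 (t : ℂ) (ht0 : t ≠ 0)
    (ht : ∀ n : ℕ, 0 < n → t ^ n ≠ 1) (a : ℂ) (ha : a ≠ 0) :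
    K1 t = (K0 t)⁻¹ * (K0 t)⁻¹
    ∧ K0 t * X1p t a * (K0 t)⁻¹ = ((t ^ 2) ^ 2)⁻¹ • X1p t a
    ∧ K0 t * X0p t * (K0 t)⁻¹ = (t ^ 2) • X0p t
    ∧ K0 t * X1m t a * (K0 t)⁻¹ = (t ^ 2) ^ 2 • X1m t a
    ∧ K0 t * X0m * (K0 t)⁻¹ = (t ^ 2)⁻¹ • X0m
    ∧ X1p t a * X0m = X0m * X1p t a
    ∧ X0p t * X1m t a = X1m t a * X0p t
    ∧ X0p t * X0m - X0m * X0p t = (t - t⁻¹)⁻¹ • (K0 t - (K0 t)⁻¹)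
    ∧ X1p t a * X1m t a - X1m t a * X1p t a =
        ((t ^ 2) ^ 2 - ((t ^ 2) ^ 2)⁻¹)⁻¹ • (K1 t - (K1 t)⁻¹)
    ∧ X0p t * (X1p t a) ^ 2 - ((t ^ 2) ^ 2 + ((t ^ 2) ^ 2)⁻¹) • (X1p t a * X0p t * X1p t a)
        + (X1p t a) ^ 2 * X0p t = 0
    ∧ X0m * (X1m t a) ^ 2 - ((t ^ 2) ^ 2 + ((t ^ 2) ^ 2)⁻¹) • (X1m t a * X0m * X1m t a)
        + (X1m t a) ^ 2 * X0m = 0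
    ∧ ∑ r ∈ Finset.range 6,
        ((-1 : ℂ) ^ r * (tfac t (5 - r) * tfac t r)⁻¹) •
          (X0p t ^ (5 - r) * X1p t a * X0p t ^ r) = 0
    ∧ ∑ r ∈ Finset.range 6,
        ((-1 : ℂ) ^ r * (tfac t (5 - r) * tfac t r)⁻¹) •
          (X0m ^ (5 - r) * X1m t a * X0m ^ r) = 0 :=
  ⟨K1_eq_K0_inv_sq t ht0, K0_mul_X1p_mul_K0_inv t a ht0, K0_mul_X0p_mul_K0_inv t ht0,
    K0_mul_X1m_mul_K0_inv t a ht0, K0_mul_X0m_mul_K0_inv t ht0, X1p_mul_X0m_comm t a,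
    X0p_mul_X1m_comm t a, X0p_X0m_commutator t ht0, X1p_X1m_commutator t a ht0 ht ha,
    by simp [X1p_sq, X1p_mul_X0p_mul_X1p], by simp [X1m_sq, X1m_mul_X0m_mul_X1m],
    sum_smul_pow_mul_mul_pow_eq_zero (X0p_pow_three t) (by norm_num) _ _,
    sum_smul_pow_mul_mul_pow_eq_zero X0m_pow_three (by norm_num) _ _⟩
end
end

section
/- For all m ∈ ℤ, all r ∈ ℤ∖{0} and both signs ε ∈ {+,−}, the operators of the context satisfy k·x_m^ε·k^{-1} = q^{ε1}·x_m^ε and [H_r, x_m^ε] = ε·(q^r + q^{-r} + (−1)^{r+1})·x_{r+m}^ε (relations (12) and (14) between the Drinfeld generators of the twisted quantum loop algebra of type A_2^{(2)} hold on the 6-dimensional Kirillov–Reshetikhin module). -/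
noncomputable section

/-- `[4]_t = (t⁴ - t⁻⁴)/(t - t⁻¹)`. -/
def tfour (t : ℂ) : ℂ := (t ^ 4 - t⁻¹ ^ 4) / (t - t⁻¹)

/-- `ν = q^{-3/2}(1+q)(1-q+q²-q³+q⁴)/(1-q+q²)` with `q = t²`, `q^{-3/2} = t⁻³`. -/
def nuC (t : ℂ) : ℂ :=
  t⁻¹ ^ 3 * (1 + t ^ 2) * (1 - t ^ 2 + t ^ 4 - t ^ 6 + t ^ 8) / (1 - t ^ 2 + t ^ 4)

/-- `μ = q^{-1/2}(1+q²)(1+q)/(1-q+q²)` with `q = t²`, `q^{-1/2} = t⁻¹`. -/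
def muC (t : ℂ) : ℂ := t⁻¹ * (1 + t ^ 4) * (1 + t ^ 2) / (1 - t ^ 2 + t ^ 4)

/-- `q = t²` (so that the half-integer powers of `q` make sense as powers of `t`). -/
def qC (t : ℂ) : ℂ := t ^ 2

/-- The Drinfeld generator `x_r⁺` acting on the Kirillov–Reshetikhin module
`W_{2,1} = ℂ⁶` of type `A₂⁽²⁾`. -/
def xp (t : ℂ) (r : ℤ) : Matrix (Fin 6) (Fin 6) ℂ :=
  !![0, qC t ^ (3 * r), 0, 0, 0, 0;
     0, 0, (-qC t ^ 4) ^ r * nuC t, qC t ^ r * muC t, 0, 0;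
     0, 0, 0, 0, qC t ^ r, 0;
     0, 0, 0, 0, (-qC t ^ 4) ^ r, 0;
     0, 0, 0, 0, 0, tfour t * (-qC t ^ 2) ^ r;
     0, 0, 0, 0, 0, 0]

/-- The Drinfeld generator `x_r⁻` acting on the Kirillov–Reshetikhin module
`W_{2,1} = ℂ⁶` of type `A₂⁽²⁾`. -/
def xm (t : ℂ) (r : ℤ) : Matrix (Fin 6) (Fin 6) ℂ :=
  !![0, 0, 0, 0, 0, 0;
     qC t ^ (3 * r) * tfour t, 0, 0, 0, 0, 0;
     0, (-qC t ^ 4) ^ r, 0, 0, 0, 0;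
     0, qC t ^ r, 0, 0, 0, 0;
     0, 0, nuC t * qC t ^ r, muC t * (-qC t ^ 4) ^ r, 0, 0;
     0, 0, 0, 0, (-qC t ^ 2) ^ r, 0]

/-- The operator `k = diag(q², q, 1, 1, q⁻¹, q⁻²)`. -/
def kOp (t : ℂ) : Matrix (Fin 6) (Fin 6) ℂ :=
  Matrix.diagonal ![qC t ^ 2, qC t, 1, 1, (qC t)⁻¹, (qC t ^ 2)⁻¹]

/-- The Drinfeld generator `H_r` acting diagonally on `W_{2,1} = ℂ⁶`. -/
def HOp (t : ℂ) (r : ℤ) : Matrix (Fin 6) (Fin 6) ℂ :=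
  Matrix.diagonal
    ![1 + qC t ^ (2 * r),
      1 + (-qC t ^ 3) ^ r - qC t ^ (4 * r),
      1 - (-qC t ^ 5) ^ r,
      (-qC t) ^ r - qC t ^ (2 * r) + (-qC t ^ 3) ^ r - qC t ^ (4 * r),
      (-qC t) ^ r - qC t ^ (2 * r) - (-qC t ^ 5) ^ r,
      -(-qC t ^ 3) ^ r - (-qC t ^ 5) ^ r]

/-!
All operators are explicit `6 × 6` matrices and `k`, `H_r` are diagonal, so both relations hold
entrywise: conjugating by `diag(k_i)` scales the `(i, j)` entry by `k_i / k_j`, and commuting with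
`diag(h_i)` scales it by `h_i - h_j`. The entries of `x_m^±` sit on the edges `0–1, 1–2, 1–3, 2–4,
3–4, 4–5` and depend on `m` only through a factor `λ^m` with `λ ∈ {q³, -q⁴, q, -q²}`. Relation (12)
is `k_i / k_j = q` along every edge. For (14), write the eigenvalues of `H_r` as polynomials in
`x = q^r` and `s = (-1)^r`: along each edge `h_i - h_j = (x + x⁻¹ - s) λ^r`, using only `s² = 1`.
-/

namespace Matrix

variable {n K : Type*} [Fintype n] [DecidableEq n] [Field K]

theorem diagonal_mul_sub_mul_diagonal_apply (d : n → K) (A : Matrix n n K) (i j : n) :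
    (diagonal d * A - A * diagonal d) i j = (d i - d j) * A i j := by
  rw [sub_apply, diagonal_mul, mul_diagonal, sub_mul, mul_comm (A i j)]

theorem mul_diagonal_sub_diagonal_mul_apply (d : n → K) (A : Matrix n n K) (i j : n) :
    (A * diagonal d - diagonal d * A) i j = (d j - d i) * A i j := by
  rw [← neg_sub, neg_apply, diagonal_mul_sub_mul_diagonal_apply, ← neg_mul, neg_sub]

theorem inv_diagonal_of_ne_zero_s7 {d : n → K} (hd : ∀ i, d i ≠ 0) :
    (diagonal d)⁻¹ = diagonal d⁻¹ :=
  inv_eq_left_inv <| by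
    rw [diagonal_mul_diagonal, ← diagonal_one]
    exact congrArg diagonal (funext fun i => inv_mul_cancel₀ (hd i))

theorem diagonal_mul_mul_inv_diagonal_apply {d : n → K} (hd : ∀ i, d i ≠ 0) (A : Matrix n n K)
    (i j : n) : (diagonal d * A * (diagonal d)⁻¹) i j = d i * A i j / d j := by
  rw [inv_diagonal_of_ne_zero_s7 hd, mul_diagonal, diagonal_mul, Pi.inv_apply, div_eq_mul_inv]

end Matrix

section

variable {K : Type*} [Field K]

theorem neg_pow_zpow (a : K) (k : ℕ) (r : ℤ) : (-a ^ k) ^ r = (-1) ^ r * (a ^ r) ^ k := by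
  rw [neg_eq_neg_one_mul, mul_zpow, ← zpow_natCast, ← zpow_natCast, ← zpow_mul, ← zpow_mul,
    mul_comm (k : ℤ)]

theorem neg_one_zpow_sq (r : ℤ) : ((-1 : K) ^ r) ^ 2 = 1 := by
  rw [← zpow_natCast, ← zpow_mul, mul_comm, zpow_mul]
  simp

def hEigenvalue (x s : K) : Fin 6 → K :=
  ![1 + x ^ 2, 1 + s * x ^ 3 - x ^ 4, 1 - s * x ^ 5, s * x - x ^ 2 + s * x ^ 3 - x ^ 4,
    s * x - x ^ 2 - s * x ^ 5, -(s * x ^ 3) - s * x ^ 5]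

theorem hEigenvalue_gaps {x s : K} (hx : x ≠ 0) (hs : s ^ 2 = 1) :
    hEigenvalue x s 0 - hEigenvalue x s 1 = (x + x⁻¹ - s) * x ^ 3 ∧
    hEigenvalue x s 1 - hEigenvalue x s 2 = (x + x⁻¹ - s) * (s * x ^ 4) ∧
    hEigenvalue x s 1 - hEigenvalue x s 3 = (x + x⁻¹ - s) * x ∧
    hEigenvalue x s 2 - hEigenvalue x s 4 = (x + x⁻¹ - s) * x ∧
    hEigenvalue x s 3 - hEigenvalue x s 4 = (x + x⁻¹ - s) * (s * x ^ 4) ∧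
    hEigenvalue x s 4 - hEigenvalue x s 5 = (x + x⁻¹ - s) * (s * x ^ 2) := by
  simp only [hEigenvalue, Matrix.cons_val]
  refine ⟨?_, ?_, ?_, ?_, ?_, ?_⟩ <;> field_simp
  · ring
  · linear_combination x ^ 4 * hs
  · ring
  · ring
  · linear_combination x ^ 3 * hs
  · linear_combination x * hs

end

theorem qC_ne_zero {t : ℂ} (ht0 : t ≠ 0) : qC t ≠ 0 := pow_ne_zero 2 ht0

theorem HOp_eq_diagonal_hEigenvalue (t : ℂ) (r : ℤ) :
    HOp t r = Matrix.diagonal (hEigenvalue (qC t ^ r) ((-1) ^ r)) := by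
  simp only [HOp, hEigenvalue, neg_pow_zpow, mul_comm _ r, zpow_mul, zpow_ofNat]
  rw [neg_eq_neg_one_mul (qC t), mul_zpow]

theorem HOp_mul_xp_sub_xp_mul_HOp (t : ℂ) (ht0 : t ≠ 0) (r m : ℤ) :
    HOp t r * xp t m - xp t m * HOp t r =
      (qC t ^ r + qC t ^ (-r) + (-1 : ℂ) ^ (r + 1)) • xp t (r + m) := by
  have hq := qC_ne_zero ht0
  obtain ⟨h01, h12, h13, h24, h34, h45⟩ :=
    hEigenvalue_gaps (zpow_ne_zero r hq) (neg_one_zpow_sq r)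
  ext i j
  rw [HOp_eq_diagonal_hEigenvalue, Matrix.diagonal_mul_sub_mul_diagonal_apply]
  fin_cases i <;> fin_cases j <;>
    simp only [xp, Matrix.of_apply, Matrix.cons_val', Matrix.cons_val, Matrix.cons_val_zero,
      Matrix.cons_val_one, Matrix.cons_val_fin_one, Fin.isValue, Fin.mk_one, Fin.zero_eta,
      Fin.reduceFinMk, Matrix.smul_apply, smul_eq_mul, sub_self, mul_zero] <;>
    simp only [h01, h12, h13, h24, h34, h45, neg_pow_zpow, mul_comm _ (r + m), mul_comm _ m,
      zpow_mul, zpow_ofNat, zpow_neg, zpow_add₀ hq,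
      zpow_add₀ (neg_ne_zero.2 one_ne_zero : (-1 : ℂ) ≠ 0)] <;>
    ring

theorem xm_mul_HOp_sub_HOp_mul_xm (t : ℂ) (ht0 : t ≠ 0) (r m : ℤ) :
    xm t m * HOp t r - HOp t r * xm t m =
      (qC t ^ r + qC t ^ (-r) + (-1 : ℂ) ^ (r + 1)) • xm t (r + m) := by
  have hq := qC_ne_zero ht0
  obtain ⟨h01, h12, h13, h24, h34, h45⟩ :=
    hEigenvalue_gaps (zpow_ne_zero r hq) (neg_one_zpow_sq r)
  ext i j
  rw [HOp_eq_diagonal_hEigenvalue, Matrix.mul_diagonal_sub_diagonal_mul_apply]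
  fin_cases i <;> fin_cases j <;>
    simp only [xm, Matrix.of_apply, Matrix.cons_val', Matrix.cons_val, Matrix.cons_val_zero,
      Matrix.cons_val_one, Matrix.cons_val_fin_one, Fin.isValue, Fin.mk_one, Fin.zero_eta,
      Fin.reduceFinMk, Matrix.smul_apply, smul_eq_mul, sub_self, mul_zero] <;>
    simp only [h01, h12, h13, h24, h34, h45, neg_pow_zpow, mul_comm _ (r + m), mul_comm _ m,
      zpow_mul, zpow_ofNat, zpow_neg, zpow_add₀ hq,
      zpow_add₀ (neg_ne_zero.2 one_ne_zero : (-1 : ℂ) ≠ 0)] <;>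
    ring

theorem kOp_diag_ne_zero {t : ℂ} (ht0 : t ≠ 0) :
    ∀ i, ![qC t ^ 2, qC t, 1, 1, (qC t)⁻¹, (qC t ^ 2)⁻¹] i ≠ 0 := by
  intro i
  fin_cases i <;> simp [qC_ne_zero ht0]

theorem kOp_mul_xp_mul_inv (t : ℂ) (ht0 : t ≠ 0) (m : ℤ) :
    kOp t * xp t m * (kOp t)⁻¹ = qC t • xp t m := by
  have hq := qC_ne_zero ht0
  ext i j
  rw [kOp, Matrix.diagonal_mul_mul_inv_diagonal_apply (kOp_diag_ne_zero ht0)]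
  fin_cases i <;> fin_cases j <;>
    simp only [xp, Matrix.of_apply, Matrix.cons_val', Matrix.cons_val, Matrix.cons_val_zero,
      Matrix.cons_val_one, Matrix.cons_val_fin_one, Fin.isValue, Fin.mk_one, Fin.zero_eta,
      Fin.reduceFinMk, Matrix.smul_apply, smul_eq_mul, mul_zero, zero_div] <;>
    field_simp

theorem kOp_mul_xm_mul_inv (t : ℂ) (ht0 : t ≠ 0) (m : ℤ) :
    kOp t * xm t m * (kOp t)⁻¹ = (qC t)⁻¹ • xm t m := by
  have hq := qC_ne_zero ht0
  ext i j
  rw [kOp, Matrix.diagonal_mul_mul_inv_diagonal_apply (kOp_diag_ne_zero ht0)]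
  fin_cases i <;> fin_cases j <;>
    simp only [xm, Matrix.of_apply, Matrix.cons_val', Matrix.cons_val, Matrix.cons_val_zero,
      Matrix.cons_val_one, Matrix.cons_val_fin_one, Fin.isValue, Fin.mk_one, Fin.zero_eta,
      Fin.reduceFinMk, Matrix.smul_apply, smul_eq_mul, mul_zero, zero_div] <;>
    field_simp

theorem drinfeld_relations_W2_general (t : ℂ) (ht0 : t ≠ 0)
    (m : ℤ) (r : ℤ) :
    kOp t * xp t m * (kOp t)⁻¹ = qC t • xp t m
    ∧ kOp t * xm t m * (kOp t)⁻¹ = (qC t)⁻¹ • xm t m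
    ∧ HOp t r * xp t m - xp t m * HOp t r =
        (qC t ^ r + qC t ^ (-r) + (-1 : ℂ) ^ (r + 1)) • xp t (r + m)
    ∧ HOp t r * xm t m - xm t m * HOp t r =
        -((qC t ^ r + qC t ^ (-r) + (-1 : ℂ) ^ (r + 1)) • xm t (r + m)) :=
  ⟨kOp_mul_xp_mul_inv t ht0 m, kOp_mul_xm_mul_inv t ht0 m, HOp_mul_xp_sub_xp_mul_HOp t ht0 r m,
    by rw [← xm_mul_HOp_sub_HOp_mul_xm t ht0 r m, neg_sub]⟩

/-- Relations (12) and (14) between the Drinfeld generators of the twisted quantum loop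
algebra of type `A₂⁽²⁾` hold on the 6-dimensional Kirillov–Reshetikhin module:
`k x_m^± k⁻¹ = q^{±1} x_m^±` and `[H_r, x_m^±] = ±(q^r + q^{-r} + (-1)^{r+1}) x_{r+m}^±`. -/
theorem drinfeld_relations_W2 (t : ℂ) (ht0 : t ≠ 0) (ht : ∀ n : ℕ, 0 < n → t ^ n ≠ 1)
    (m : ℤ) (r : ℤ) (hr : r ≠ 0) :
    kOp t * xp t m * (kOp t)⁻¹ = qC t • xp t m
    ∧ kOp t * xm t m * (kOp t)⁻¹ = (qC t)⁻¹ • xm t m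
    ∧ HOp t r * xp t m - xp t m * HOp t r =
        (qC t ^ r + qC t ^ (-r) + (-1 : ℂ) ^ (r + 1)) • xp t (r + m)
    ∧ HOp t r * xm t m - xm t m * HOp t r =
        -((qC t ^ r + qC t ^ (-r) + (-1 : ℂ) ^ (r + 1)) • xm t (r + m)) :=
  drinfeld_relations_W2_general t ht0 m r
end
end

section
/- Let T = (T_{i,p}), i ∈ {1,2}, 1 ≤ p ≤ k, be an array with entries in B satisfying conditions (θ1) and (θ2). Then: T satisfies (θ3) if and only if there are no 1 ≤ p < p' ≤ k with (T_{1,p},T_{2,p}) = (3,4) and (T_{1,p'},T_{2,p'}) = (4,3̄); and T satisfies (θ4) if and only if there are no 1 ≤ p < p' ≤ k with (T_{1,p},T_{2,p}) = (3,4̄) and (T_{1,p'},T_{2,p'}) = (4̄,3̄). -/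
/-- The set `B = {1,2,3,4,4̄,3̄,2̄,1̄}`. -/
inductive BB : Type
  | b1 | b2 | b3 | b4 | b4' | b3' | b2' | b1'
  deriving DecidableEq

instance : Fintype BB where
  elems := {.b1, .b2, .b3, .b4, .b4', .b3', .b2', .b1'}
  complete := by intro x; cases x <;> decide

/-- The rank used to define the partial order on `B`
(`4` and `4̄` get the same rank, making them incomparable). -/
def BB.rank : BB → ℕ
  | .b1 => 0 | .b2 => 1 | .b3 => 2 | .b4 => 3 | .b4' => 3
  | .b3' => 4 | .b2' => 5 | .b1' => 6

/-- The partial order `⪯` on `B` : `1 ≺ 2 ≺ 3 ≺ 4 ≺ 3̄ ≺ 2̄ ≺ 1̄` and `3 ≺ 4̄ ≺ 3̄`,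
with `4` and `4̄` incomparable. -/
def BB.le (x y : BB) : Prop := x = y ∨ x.rank < y.rank

/-- `Tab(1,k)`: sequences `(T_1,…,T_k)` in `B` with `T_p ⪯ T_{p+1}`. -/
def IsTab1 (k : ℕ) (T : Fin k → BB) : Prop :=
  ∀ (p : ℕ) (h : p + 1 < k), BB.le (T ⟨p, Nat.lt_of_succ_lt h⟩) (T ⟨p + 1, h⟩)

/-! Here `x ∈ {4, 4̄}` satisfies `3 ⋖ x ⋖ 3̄` in `B`, so between a `3` and an `x` a weakly
increasing row only takes the values `3` and `x`, and between an `x` and a `3̄` only `x` and `3̄`.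
Given the columns `(3, x)` at `p` and `(x, 3̄)` at `p'`, let `q'` be the first column after `p`
with top entry `x`; its bottom entry is `3̄`, since (θ2) forbids `(x, x)`. The last column `q`
before `q'` with bottom entry `x` then starts the configuration of (θ3) (resp. (θ4)) ending at
`q'`. -/

instance : PartialOrder BB where
  le := BB.le
  le_refl _ := Or.inl rfl
  le_trans a b c hab hbc := by
    rcases hab with rfl | hab
    · exact hbc
    · rcases hbc with rfl | hbc
      · exact Or.inr hab
      · exact Or.inr (hab.trans hbc)
  le_antisymm a b hab hba := by
    rcases hab with rfl | hab
    · rfl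
    · rcases hba with rfl | hba
      · rfl
      · omega

instance : DecidableRel (α := BB) (· ≤ ·) := fun x y =>
  inferInstanceAs (Decidable (x = y ∨ x.rank < y.rank))

instance : DecidableRel (α := BB) (· < ·) := decidableLTOfDecidableLE

theorem BB.b3_covBy_b4 : BB.b3 ⋖ BB.b4 := ⟨by decide, fun c => by cases c <;> decide⟩
theorem BB.b4_covBy_b3' : BB.b4 ⋖ BB.b3' := ⟨by decide, fun c => by cases c <;> decide⟩
theorem BB.b3_covBy_b4' : BB.b3 ⋖ BB.b4' := ⟨by decide, fun c => by cases c <;> decide⟩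
theorem BB.b4'_covBy_b3' : BB.b4' ⋖ BB.b3' := ⟨by decide, fun c => by cases c <;> decide⟩

theorem IsTab1.monotone {k : ℕ} {f : Fin k → BB} (h : IsTab1 k f) : Monotone f := by
  cases k with
  | zero => exact fun i => i.elim0
  | succ n => exact Fin.monotone_iff_le_succ.2 fun i => h i (by omega)

section Monotone

variable {ι α : Type*} [LinearOrder ι] [LocallyFiniteOrder ι] [PartialOrder α]
  {f g : ι → α} {a x c : α} {p p' : ι}

theorem Monotone.exists_first_eq_of_covBy (hf : Monotone f) (hax : a ⋖ x) (hpp' : p ≤ p')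
    (hp : f p = a) (hp' : f p' = x) :
    ∃ q, p < q ∧ q ≤ p' ∧ f q = x ∧ ∀ r, p ≤ r → r < q → f r = a := by
  classical
  obtain ⟨q, hq, hmin⟩ := ((Finset.Icc p p').filter (f · = x)).exists_min_image id
    ⟨p', by simp [hpp', hp']⟩
  simp only [Finset.mem_filter, Finset.mem_Icc] at hq hmin
  obtain ⟨⟨hpq, hqp'⟩, hfq⟩ := hq
  refine ⟨q, hpq.lt_of_ne ?_, hqp', hfq, fun r hpr hrq => ?_⟩
  · rintro rfl
    exact hax.ne (hp.symm.trans hfq)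
  · have hfr := hax.eq_or_eq (hp ▸ hf hpr) (hfq ▸ hf hrq.le)
    exact hfr.resolve_right fun hfr => (hmin r ⟨⟨hpr, (hrq.trans_le hqp').le⟩, hfr⟩).not_gt hrq

theorem Monotone.exists_last_eq_of_covBy (hg : Monotone g) (hxc : x ⋖ c) (hpp' : p ≤ p')
    (hp : g p = x) (hp' : g p' = c) :
    ∃ q, p ≤ q ∧ q < p' ∧ g q = x ∧ ∀ r, q < r → r ≤ p' → g r = c := by
  obtain ⟨q, hqp', hpq, hgq, hc⟩ :=
    Monotone.exists_first_eq_of_covBy (ι := ιᵒᵈ) (α := αᵒᵈ) hg.dual hxc.toDual hpp' hp' hp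
  exact ⟨q, hpq, hqp', hgq, fun r hqr hrp' => hc r hrp' hqr⟩

theorem exists_covBy_pattern_iff (hf : Monotone f) (hg : Monotone g) (hfg : ∀ i, f i ≠ g i)
    (hax : a ⋖ x) (hxc : x ⋖ c) :
    (∃ p p', p < p' ∧ (∀ r, p ≤ r → r < p' → f r = a) ∧ f p' = x ∧
        g p = x ∧ ∀ r, p < r → r ≤ p' → g r = c) ↔
      ∃ p p', p < p' ∧ f p = a ∧ g p = x ∧ f p' = x ∧ g p' = c := by
  constructor
  · rintro ⟨p, p', hpp', hfa, hfp', hgp, hgc⟩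
    exact ⟨p, p', hpp', hfa p le_rfl hpp', hgp, hfp', hgc p' hpp' le_rfl⟩
  · rintro ⟨p, p', hpp', hfp, hgp, hfp', hgp'⟩
    obtain ⟨q', hpq', hq'p', hfq', hfa⟩ := hf.exists_first_eq_of_covBy hax hpp'.le hfp hfp'
    have hgq' : g q' = c :=
      (hxc.eq_or_eq (hgp ▸ hg hpq'.le) (hgp' ▸ hg hq'p')).resolve_left
        fun h => hfg q' (hfq'.trans h.symm)
    obtain ⟨q, hpq, hqq', hgq, hgc⟩ := hg.exists_last_eq_of_covBy hxc hpq'.le hgp hgq'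
    exact ⟨q, q', hqq', fun r hqr hrq' => hfa r (hpq.trans hqr) hrq', hfq', hgq, hgc⟩

end Monotone

/-- Rows are indexed by `Fin 2`: row `i` is row `i+1` of the paper. -/
theorem theta3_theta4_equiv (k : ℕ) (T : Fin 2 → Fin k → BB)
    (h1 : ∀ i : Fin 2, IsTab1 k (T i))
    (h2 : ∀ p : Fin k, ¬ BB.le (T 1 p) (T 0 p)) :
    ((¬ ∃ p p' : Fin k, p < p' ∧
        (∀ r : Fin k, p ≤ r → r < p' → T 0 r = BB.b3) ∧ T 0 p' = BB.b4 ∧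
        T 1 p = BB.b4 ∧ (∀ r : Fin k, p < r → r ≤ p' → T 1 r = BB.b3')) ↔
      (¬ ∃ p p' : Fin k, p < p' ∧
        T 0 p = BB.b3 ∧ T 1 p = BB.b4 ∧ T 0 p' = BB.b4 ∧ T 1 p' = BB.b3'))
    ∧ ((¬ ∃ p p' : Fin k, p < p' ∧
        (∀ r : Fin k, p ≤ r → r < p' → T 0 r = BB.b3) ∧ T 0 p' = BB.b4' ∧
        T 1 p = BB.b4' ∧ (∀ r : Fin k, p < r → r ≤ p' → T 1 r = BB.b3')) ↔
      (¬ ∃ p p' : Fin k, p < p' ∧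
        T 0 p = BB.b3 ∧ T 1 p = BB.b4' ∧ T 0 p' = BB.b4' ∧ T 1 p' = BB.b3')) := by
  have hne : ∀ p, T 0 p ≠ T 1 p := fun p h => h2 p (Or.inl h.symm)
  exact ⟨not_congr (exists_covBy_pattern_iff (h1 0).monotone (h1 1).monotone hne
      BB.b3_covBy_b4 BB.b4_covBy_b3'),
    not_congr (exists_covBy_pattern_iff (h1 0).monotone (h1 1).monotone hne
      BB.b3_covBy_b4' BB.b4'_covBy_b3')⟩
end

section
/- With the notion of right-negative monomial defined in the context: (1) for every a ∈ ℂ∖{0}, the monomial A_a^{-1} = Z_{aq}^{-1}·Z_{aq^{-1}}^{-1}·Z_{−a} is right-negative; (2) the product of two right-negative monomials is right-negative; (3) if m is right-negative and m' = m·∏_{l=1}^{N} A_{b_l}^{-1} for some N ≥ 0 and b_1,…,b_N ∈ ℂ∖{0} (i.e. m' ≤ m in the sense of monomials), then m' is right-negative. In particular a right-negative monomial is not dominant. -/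
noncomputable section

/-- A monomial is dominant if all its exponents are nonnegative. -/
def Dominant (m : Mon) : Prop := ∀ a : ℂˣ, 0 ≤ m a

/-- A monomial `m` is right-negative if for every `a ∈ ℂ∖{0}` for which the set
`S_a(m) = {l ∈ ℤ : z_{aq^l}(m) ≠ 0 or z_{-aq^l}(m) ≠ 0}` is nonempty, at its maximum `L`
one has `z_{aq^L}(m) ≤ 0` and `z_{-aq^L}(m) ≤ 0`.  (Here `L` being the maximum is expressed
by `L ∈ S_a(m)` together with `L` being an upper bound of `S_a(m)`.) -/
def RightNeg (q : ℂˣ) (m : Mon) : Prop :=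
  ∀ (a : ℂˣ) (L : ℤ),
    (m (a * q ^ L) ≠ 0 ∨ m (-(a * q ^ L)) ≠ 0) →
    (∀ l : ℤ, L < l → m (a * q ^ l) = 0 ∧ m (-(a * q ^ l)) = 0) →
    m (a * q ^ L) ≤ 0 ∧ m (-(a * q ^ L)) ≤ 0

section RightNeg

variable {q : ℂˣ}

/-- `¬VanishesAt q m a l` is the condition `l ∈ S_a(m)`. -/
def VanishesAt (q : ℂˣ) (m : Mon) (a : ℂˣ) (l : ℤ) : Prop :=
  m (a * q ^ l) = 0 ∧ m (-(a * q ^ l)) = 0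

lemma finite_setOf_not_vanishesAt (hq : ¬IsOfFinOrder q) (m : Mon) (a : ℂˣ) :
    {l | ¬VanishesAt q m a l}.Finite := by
  have hinj : Function.Injective (fun l : ℤ => a * q ^ l) :=
    (mul_right_injective a).comp (injective_zpow_iff_not_isOfFinOrder.2 hq)
  have hsupp : (m.support : Set ℂˣ).Finite := m.support.finite_toSet
  refine ((hsupp.preimage hinj.injOn).union
    (hsupp.preimage (neg_injective.comp hinj).injOn)).subset fun l hl => ?_
  simpa [VanishesAt, or_iff_not_and_not] using hl

lemma RightNeg.le_zero {m : Mon} (hm : RightNeg q m) {a : ℂˣ} {L : ℤ}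
    (hL : ∀ l, L < l → VanishesAt q m a l) : m (a * q ^ L) ≤ 0 ∧ m (-(a * q ^ L)) ≤ 0 := by
  by_cases h : VanishesAt q m a L
  · exact ⟨h.1.le, h.2.le⟩
  · exact hm a L (not_and_or.1 h) hL

lemma rightNeg_zero : RightNeg q 0 := fun _ _ h _ => by simp at h

/-- Above the top level `L` of `S_a(m + m')` both summands vanish: at the top level `K > L`
of their supports both would be nonpositive with zero sum, hence zero. -/
lemma RightNeg.vanishesAt_of_add (hq : ¬IsOfFinOrder q) {m m' : Mon} (hm : RightNeg q m)
    (hm' : RightNeg q m') {a : ℂˣ} {L : ℤ} (hL : ∀ l, L < l → VanishesAt q (m + m') a l) :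
    ∀ l, L < l → VanishesAt q m a l ∧ VanishesAt q m' a l := by
  by_contra! hne
  obtain ⟨l₀, hl₀, h₀⟩ := hne
  set T := {l | L < l ∧ ¬(VanishesAt q m a l ∧ VanishesAt q m' a l)}
  have hT : T.Finite := ((finite_setOf_not_vanishesAt hq m a).union
    (finite_setOf_not_vanishesAt hq m' a)).subset fun l hl => by
      simpa only [Set.mem_union, Set.mem_ofPred_eq, not_and_or] using hl.2
  obtain ⟨K, ⟨hLK, hK⟩, hKmax⟩ := T.exists_max_image id hT
    ⟨l₀, hl₀, fun h => h₀ h.1 h.2⟩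
  have habove : ∀ l, K < l → VanishesAt q m a l ∧ VanishesAt q m' a l := fun l hl =>
    by_contra fun h => (hKmax l ⟨hLK.trans hl, h⟩).not_gt hl
  have h₁ := hm.le_zero fun l hl => (habove l hl).1
  have h₂ := hm'.le_zero fun l hl => (habove l hl).2
  have hsum := hL K hLK
  simp only [VanishesAt, Finsupp.add_apply] at hsum
  exact hK ⟨⟨by omega, by omega⟩, ⟨by omega, by omega⟩⟩

lemma RightNeg.add (hq : ¬IsOfFinOrder q) {m m' : Mon} (hm : RightNeg q m)
    (hm' : RightNeg q m') : RightNeg q (m + m') := by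
  intro a L _ hL
  have h₁ := hm.le_zero fun l hl => (hm.vanishesAt_of_add hq hm' hL l hl).1
  have h₂ := hm'.le_zero fun l hl => (hm.vanishesAt_of_add hq hm' hL l hl).2
  simp only [Finsupp.add_apply]
  omega

lemma neg_A_apply_le_zero {a x : ℂˣ} (hx : x ≠ -a) : (-(A q a)) x ≤ 0 := by
  simp only [A, Z, Finsupp.neg_apply, Finsupp.sub_apply, Finsupp.add_apply,
    Finsupp.single_apply, if_neg hx.symm]
  split_ifs <;> omega

lemma neg_A_apply_mul (hq : q ^ 2 ≠ 1) (a : ℂˣ) : (-(A q a)) (a * q) = -1 := by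
  have hinv : a * q⁻¹ ≠ a * q := by
    rw [Ne, mul_right_inj]
    intro h
    apply hq
    rw [sq]
    nth_rw 1 [← h]
    exact inv_mul_cancel q
  have hneg : -a ≠ a * q := by
    rw [← mul_neg_one, Ne, mul_right_inj]
    rintro rfl
    exact hq (by simp)
  simp [A, Z, hinv, hneg]

/-- If `b q^L = ±a` were the top level of `S_b(-A_a)`, then `aq = ±b q^(L+1)` would lie above it. -/
lemma rightNeg_neg_A (hq : q ^ 2 ≠ 1) (a : ℂˣ) : RightNeg q (-(A q a)) := by
  intro b L _ hL
  have hshift : b * q ^ (L + 1) = b * q ^ L * q := by rw [zpow_add_one, mul_assoc]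
  have hpos : b * q ^ L ≠ a := fun h => by
    have := (hL (L + 1) (by omega)).1
    rw [hshift, h, neg_A_apply_mul hq] at this
    exact absurd this (by norm_num)
  have hneg : b * q ^ L ≠ -a := fun h => by
    have := (hL (L + 1) (by omega)).2
    rw [hshift, h, neg_mul, neg_neg, neg_A_apply_mul hq] at this
    exact absurd this (by norm_num)
  exact ⟨neg_A_apply_le_zero hneg, neg_A_apply_le_zero (neg_injective.ne hpos)⟩

lemma RightNeg.sub_sum_A (hq : ¬IsOfFinOrder q) {m : Mon} (hm : RightNeg q m) {ι : Type*}
    (s : Finset ι) (b : ι → ℂˣ) : RightNeg q (m - ∑ i ∈ s, A q (b i)) := by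
  have hq2 : q ^ 2 ≠ 1 := fun h => hq (isOfFinOrder_iff_pow_eq_one.2 ⟨2, two_pos, h⟩)
  rw [sub_eq_add_neg, ← Finset.sum_neg_distrib]
  exact hm.add hq (Finset.sum_induction _ (RightNeg q) (fun _ _ => RightNeg.add hq)
    rightNeg_zero fun i _ => rightNeg_neg_A hq2 (b i))

lemma RightNeg.not_dominant (hq : ¬IsOfFinOrder q) {m : Mon} (hm : RightNeg q m)
    (hm0 : m ≠ 0) : ¬Dominant m := by
  intro hdom
  obtain ⟨c, hc⟩ := Finsupp.ne_iff.1 hm0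
  have h0 : (0 : ℤ) ∈ {l | ¬VanishesAt q m c l} := fun h => hc (by simpa [VanishesAt] using h.1)
  obtain ⟨L, hL, hLmax⟩ :=
    Set.exists_max_image _ id (finite_setOf_not_vanishesAt hq m c) ⟨0, h0⟩
  have hle := hm.le_zero fun l hl => by_contra fun h => (hLmax l h).not_gt hl
  exact hL ⟨le_antisymm hle.1 (hdom _), le_antisymm hle.2 (hdom _)⟩

end RightNeg

/-- Properties of right-negative monomials for the twisted quantum loop algebra of
type `A₂⁽²⁾` : (1) each `A_a⁻¹` is right-negative; (2) a product of right-negative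
monomials is right-negative; (3) if `m` is right-negative and `m' = m · ∏ A_{b_l}⁻¹`
(i.e. `m' ≤ m`), then `m'` is right-negative; in particular a (nontrivial)
right-negative monomial is not dominant. -/
theorem right_negative_properties (q : ℂˣ) (hq : ∀ n : ℕ, 0 < n → (q : ℂ) ^ n ≠ 1) :
    (∀ a : ℂˣ, RightNeg q (-(A q a)))
    ∧ (∀ m m' : Mon, RightNeg q m → RightNeg q m' → RightNeg q (m + m'))
    ∧ (∀ m : Mon, RightNeg q m → ∀ (N : ℕ) (b : Fin N → ℂˣ),
        RightNeg q (m - ∑ l : Fin N, A q (b l)))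
    ∧ (∀ m : Mon, m ≠ 0 → RightNeg q m → ¬ Dominant m) := by
  have hq' : ¬IsOfFinOrder q := by
    rw [← Units.isOfFinOrder_val, isOfFinOrder_iff_pow_eq_one]
    rintro ⟨n, hn, h⟩
    exact hq n hn h
  refine ⟨rightNeg_neg_A fun h => hq' (isOfFinOrder_iff_pow_eq_one.2 ⟨2, two_pos, h⟩),
    fun m m' hm hm' => hm.add hq' hm', fun m hm N b => hm.sub_sum_A hq' _ b,
    fun m hm0 hm => hm.not_dominant hq' hm0⟩
end
end
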